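/- arXiv:2007.05665 — 5 statements merged into one kernel-verified Lean document; each statement's English description precedes it below -/
import Mathlib

section
/- If 𝒮 = {S_1, …, S_n} is a collection of n subsets of a ground set Ω and R ⊆ Ω is pairwise separated by 𝒮, then |R| ≤ 2^{n−1}. -/
/-- A set `R ⊆ Ω` is *pairwise separated* by the collection `𝒮 = {S 1, …, S n}` if for
every ordered pair of distinct elements `x, y ∈ R` there is an `i` with
`x ∈ S i` and `y ∉ S i`. -/
def PairwiseSeparated {Ω : Type*} {n : ℕ} (S : Fin n → Set Ω) (R : Set Ω) : Prop :=
  ∀ x ∈ R, ∀ y ∈ R, x ≠ y → ∃ i : Fin n, x ∈ S i ∧ y ∉ S i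

/-! Pairwise separation says that the index sets `{i | x ∈ S i}`, `x ∈ R`, are pairwise
incomparable. Two subsets of `Fin (m + 1)` that agree off the last index are comparable, so
forgetting the last index is injective on `R`, which gives `|R| ≤ |Set (Fin m)| = 2 ^ m`. -/

theorem Fin.subset_or_subset_of_preimage_castSucc_eq {m : ℕ} {s t : Set (Fin (m + 1))}
    (h : Fin.castSucc ⁻¹' s = Fin.castSucc ⁻¹' t) : s ⊆ t ∨ t ⊆ s := by
  by_cases hlast : Fin.last m ∈ t
  · left
    intro i hi
    induction i using Fin.lastCases with
    | last => exact hlast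
    | cast k => exact (Set.ext_iff.mp h k).mp hi
  · right
    intro i hi
    induction i using Fin.lastCases with
    | last => exact absurd hi hlast
    | cast k => exact (Set.ext_iff.mp h k).mpr hi

namespace PairwiseSeparated

variable {Ω : Type*} {n : ℕ} {S : Fin n → Set Ω} {R : Set Ω}

theorem not_subset (hR : PairwiseSeparated S R) {x y : Ω} (hx : x ∈ R) (hy : y ∈ R)
    (hxy : x ≠ y) : ¬ {i | x ∈ S i} ⊆ {i | y ∈ S i} := fun hsub =>
  let ⟨_, hxi, hyi⟩ := hR x hx y hy hxy
  hyi (hsub hxi)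

theorem subsingleton_of_fin_zero {S : Fin 0 → Set Ω} (hR : PairwiseSeparated S R) :
    R.Subsingleton := fun x hx y hy =>
  by_contra fun hxy => (hR x hx y hy hxy).choose.elim0

theorem injective_forget_last {S : Fin (n + 1) → Set Ω} (hR : PairwiseSeparated S R) :
    Function.Injective fun x : R => Fin.castSucc ⁻¹' {i | (x : Ω) ∈ S i} := by
  intro x y hxy
  by_contra hne
  have hne' : (x : Ω) ≠ y := Subtype.coe_injective.ne hne
  rcases Fin.subset_or_subset_of_preimage_castSucc_eq hxy with hsub | hsub
  · exact hR.not_subset x.2 y.2 hne' hsub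
  · exact hR.not_subset y.2 x.2 hne'.symm hsub

end PairwiseSeparated

/-- **Lemma.** If `R` is pairwise separated by a collection of `n` subsets of `Ω`,
then `|R| ≤ 2 ^ (n - 1)`. -/
theorem stmt_2 (Ω : Type*) (n : ℕ) (S : Fin n → Set Ω) (R : Set Ω)
    (hR : PairwiseSeparated S R) :
    Cardinal.mk R ≤ ((2 : Cardinal) ^ (n - 1 : ℕ)) := by
  cases n with
  | zero => simpa using Cardinal.mk_le_one_iff_set_subsingleton.mpr hR.subsingleton_of_fin_zero
  | succ m =>
    have h := Cardinal.lift_mk_le_lift_mk_of_injective hR.injective_forget_last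
    rw [Cardinal.mk_set, Cardinal.lift_two_power, Cardinal.lift_uzero, Cardinal.mk_fin,
      Cardinal.lift_natCast, Cardinal.power_natCast] at h
    simpa using h
end

section
/- Let ℛ be a nonempty finite set, ε > 0, and let q : Xⁿ × ℛ → ℝ be such that for every r ∈ ℛ the map S ↦ q(S, r) has sensitivity 1. The exponential mechanism on input S outputs r ∈ ℛ with probability proportional to exp(ε·q(S,r)/2). Then (1) the exponential mechanism is ε-differentially private, and (2) for every dataset S and every β ∈ (0,1), with probability at least 1 − β the sampled element r̂ satisfies q(S, r̂) ≥ max_{r ∈ ℛ} q(S, r) − 2·log(|ℛ|/β)/ε. -/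
/-!
Changing every score by at most 1 changes each weight `exp (ε q / 2)` by a factor at most
`exp (ε / 2)`, and the normalising sum by at most the same factor, so each probability changes
by at most `exp ε`. For utility, a candidate whose weight exponent `ε q / 2` lies at least `t`
below that of a maximiser has probability at most `exp (-t)`; a union bound over at most `|ℛ|`
candidates with `t = log (|ℛ| / β)` gives failure probability at most `β`.
-/

/-- Two datasets in `Xⁿ` are neighbors if they differ in at most one entry. -/
def Neighboring {X : Type*} {n : ℕ} (S S' : Fin n → X) : Prop :=
  ∃ i : Fin n, ∀ j : Fin n, j ≠ i → S j = S' j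

open Real Finset

section Softmax

variable {R : Type*} [Fintype R]

noncomputable def softmax (w : R → ℝ) (r : R) : ℝ :=
  exp (w r) / ∑ r', exp (w r')

variable (w : R → ℝ)

lemma softmax_le_exp_neg {r r₀ : R} {t : ℝ} (h : w r ≤ w r₀ - t) :
    softmax w r ≤ exp (-t) := by
  calc softmax w r ≤ exp (w r₀ - t) / exp (w r₀) :=
        div_le_div₀ (exp_pos _).le (exp_le_exp.2 h) (exp_pos _)
          (single_le_sum (fun r _ => (exp_pos (w r)).le) (mem_univ r₀))
    _ = exp (-t) := by rw [← exp_sub]; ring_nf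

variable [Nonempty R]

lemma sum_exp_pos : 0 < ∑ r, exp (w r) :=
  sum_pos (fun r _ => exp_pos (w r)) univ_nonempty

lemma softmax_pos (r : R) : 0 < softmax w r :=
  div_pos (exp_pos _) (sum_exp_pos w)

lemma sum_softmax : ∑ r, softmax w r = 1 := by
  simp only [softmax, ← sum_div, div_self (sum_exp_pos w).ne']

lemma softmax_le_exp_mul_softmax {w' : R → ℝ} {c : ℝ} (h : ∀ r, |w r - w' r| ≤ c)
    (r : R) : softmax w r ≤ exp (2 * c) * softmax w' r := by
  have hexp : ∀ r, exp (w r) ≤ exp c * exp (w' r) := fun r => by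
    rw [← exp_add]; exact exp_le_exp.2 (by linarith [(abs_le.1 (h r)).2])
  have hexp' : ∀ r, exp (w' r) ≤ exp c * exp (w r) := fun r => by
    rw [← exp_add]; exact exp_le_exp.2 (by linarith [(abs_le.1 (h r)).1])
  have hsum : ∑ r, exp (w' r) ≤ exp c * ∑ r, exp (w r) := by
    rw [mul_sum]; exact sum_le_sum fun r _ => hexp' r
  rw [softmax, softmax, ← mul_div_assoc, div_le_div_iff₀ (sum_exp_pos w) (sum_exp_pos w'),
    two_mul, exp_add]
  calc exp (w r) * ∑ r, exp (w' r)
      ≤ (exp c * exp (w' r)) * (exp c * ∑ r, exp (w r)) :=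
        mul_le_mul (hexp r) hsum (sum_exp_pos w').le (by positivity)
    _ = exp c * exp c * exp (w' r) * ∑ r, exp (w r) := by ring

lemma one_sub_card_mul_exp_neg_le_sum_softmax (r₀ : R) (t : ℝ) :
    1 - Fintype.card R * exp (-t) ≤
      ∑ r ∈ univ.filter (fun r => w r₀ - t ≤ w r), softmax w r := by
  have hbad : ∑ r ∈ univ.filter (fun r => ¬ w r₀ - t ≤ w r), softmax w r ≤
      Fintype.card R * exp (-t) := by
    calc _ ≤ #(univ.filter (fun r => ¬ w r₀ - t ≤ w r)) • exp (-t) :=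
          sum_le_card_nsmul _ _ _ fun r hr =>
            softmax_le_exp_neg w (r₀ := r₀) (by linarith [(mem_filter.1 hr).2])
      _ ≤ Fintype.card R • exp (-t) :=
          nsmul_le_nsmul_left (exp_pos _).le (card_filter_le _ _)
      _ = _ := nsmul_eq_mul _ _
  have htotal := sum_filter_add_sum_filter_not univ (fun r => w r₀ - t ≤ w r) (softmax w)
  rw [sum_softmax] at htotal
  linarith

end Softmax

namespace PMF

theorem toOuterMeasure_le_mul_of_le {α : Type*} {p p' : PMF α} {K : ENNReal}
    (h : ∀ a, p a ≤ K * p' a) (s : Set α) :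
    p.toOuterMeasure s ≤ K * p'.toOuterMeasure s := by
  rw [toOuterMeasure_apply, toOuterMeasure_apply, ← ENNReal.tsum_mul_left]
  refine ENNReal.tsum_le_tsum fun a => ?_
  by_cases ha : a ∈ s
  · simpa only [Set.indicator_of_mem ha] using h a
  · simp only [Set.indicator_of_notMem ha, mul_zero, le_refl]

variable {R : Type*} [Fintype R] [Nonempty R] (w : R → ℝ)

noncomputable def softmax : PMF R :=
  ofFintype (fun r => ENNReal.ofReal (_root_.softmax w r)) <| by
    rw [← ENNReal.ofReal_sum_of_nonneg fun r _ => (softmax_pos w r).le, sum_softmax,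
      ENNReal.ofReal_one]

lemma softmax_apply (r : R) :
    softmax w r = ENNReal.ofReal (exp (w r)) / ∑ r', ENNReal.ofReal (exp (w r')) := by
  rw [softmax, ofFintype_apply, _root_.softmax, ENNReal.ofReal_div_of_pos (sum_exp_pos w),
    ENNReal.ofReal_sum_of_nonneg fun r _ => (exp_pos (w r)).le]

lemma softmax_toOuterMeasure_apply (s : Set R) [DecidablePred (· ∈ s)] :
    (softmax w).toOuterMeasure s =
      ENNReal.ofReal (∑ r ∈ univ.filter (· ∈ s), _root_.softmax w r) := by
  rw [toOuterMeasure_apply_fintype, ENNReal.ofReal_sum_of_nonneg fun r _ => (softmax_pos w r).le,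
    sum_filter]
  refine sum_congr rfl fun r _ => ?_
  rw [Set.indicator_apply]
  rfl

lemma softmax_le_exp_mul_softmax {w w' : R → ℝ} {c : ℝ} (h : ∀ r, |w r - w' r| ≤ c)
    (r : R) : softmax w r ≤ ENNReal.ofReal (exp (2 * c)) * softmax w' r := by
  rw [softmax, softmax, ofFintype_apply, ofFintype_apply, ← ENNReal.ofReal_mul (exp_pos _).le]
  exact ENNReal.ofReal_le_ofReal (_root_.softmax_le_exp_mul_softmax w h r)

end PMF

section ExponentialMechanism

variable {R : Type*} [Fintype R] [Nonempty R]

noncomputable def exponentialMechanism (ε : ℝ) (u : R → ℝ) : PMF R :=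
  PMF.softmax fun r => ε * u r / 2

theorem exponentialMechanism_toOuterMeasure_le {ε : ℝ} (hε : 0 ≤ ε) {u u' : R → ℝ}
    (h : ∀ r, |u r - u' r| ≤ 1) (s : Set R) :
    (exponentialMechanism ε u).toOuterMeasure s ≤
      ENNReal.ofReal (exp ε) * (exponentialMechanism ε u').toOuterMeasure s := by
  have hscaled : ∀ r, |ε * u r / 2 - ε * u' r / 2| ≤ ε / 2 := fun r => by
    rw [← sub_div, ← mul_sub, abs_div, abs_mul, abs_of_nonneg hε, abs_two]
    gcongr
    simpa using mul_le_mul_of_nonneg_left (h r) hε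
  refine PMF.toOuterMeasure_le_mul_of_le (fun r => ?_) s
  have hr := PMF.softmax_le_exp_mul_softmax hscaled r
  rwa [mul_div_cancel₀ ε two_ne_zero] at hr

theorem ofReal_one_sub_le_exponentialMechanism_toOuterMeasure {ε β : ℝ} (hε : 0 < ε)
    (hβ : 0 < β) (u : R → ℝ) :
    ENNReal.ofReal (1 - β) ≤ (exponentialMechanism ε u).toOuterMeasure
      {r | univ.sup' univ_nonempty u - 2 * log (Fintype.card R / β) / ε ≤ u r} := by
  classical
  obtain ⟨r₀, -, hr₀⟩ := exists_mem_eq_sup' univ_nonempty u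
  set t := log (Fintype.card R / β)
  have hcard : (0 : ℝ) < Fintype.card R := by exact_mod_cast Fintype.card_pos
  have hβ' : Fintype.card R * exp (-t) = β := by
    rw [exp_neg, exp_log (div_pos hcard hβ), inv_div, mul_div_cancel₀ _ hcard.ne']
  have hset : {r | univ.sup' univ_nonempty u - 2 * t / ε ≤ u r} =
      {r | ε * u r₀ / 2 - t ≤ ε * u r / 2} := by
    ext r
    have hscale : ε * (u r₀ - 2 * t / ε) / 2 = ε * u r₀ / 2 - t := by field_simp
    rw [hr₀, Set.mem_ofPred_eq, Set.mem_ofPred_eq, ← hscale,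
      div_le_div_iff_of_pos_right two_pos, mul_le_mul_iff_right₀ hε]
  rw [hset, exponentialMechanism, PMF.softmax_toOuterMeasure_apply, ← hβ']
  exact ENNReal.ofReal_le_ofReal (one_sub_card_mul_exp_neg_le_sum_softmax _ r₀ t)

end ExponentialMechanism

/-- **Exponential mechanism (Theorem 2.6, McSherry–Talwar).** Let `ℛ` be a nonempty finite
set, `ε > 0`, and `q : Xⁿ × ℛ → ℝ` a score function of sensitivity `1` in its first argument.
The exponential mechanism, which outputs `r ∈ ℛ` with probability proportional to
`exp(ε·q(S,r)/2)`, satisfies: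
(1) `ε`-differential privacy, and
(2) for every `S` and `β ∈ (0,1)`, with probability at least `1 − β` the sampled `rr`
satisfies `q(S,rr) ≥ max_{r ∈ ℛ} q(S,r) − 2·log(|ℛ|/β)/ε`. -/
theorem stmt_4 (X : Type*) (n : ℕ) (R : Type*) [Fintype R] [Nonempty R]
    (ε : ℝ) (hε : 0 < ε) (q : (Fin n → X) → R → ℝ)
    (hq : ∀ r : R, ∀ S S' : Fin n → X, Neighboring S S' → |q S r - q S' r| ≤ 1) :
    ∃ M : (Fin n → X) → PMF R,
      (∀ S r, M S r = ENNReal.ofReal (Real.exp (ε * q S r / 2)) /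
          ∑ r' : R, ENNReal.ofReal (Real.exp (ε * q S r' / 2))) ∧
      (∀ S S' : Fin n → X, Neighboring S S' → ∀ T : Set R,
          (M S).toOuterMeasure T ≤ ENNReal.ofReal (Real.exp ε) * (M S').toOuterMeasure T) ∧
      (∀ S : Fin n → X, ∀ β : ℝ, β ∈ Set.Ioo (0 : ℝ) 1 →
          ENNReal.ofReal (1 - β) ≤ (M S).toOuterMeasure
            {rr : R | (Finset.univ.sup' Finset.univ_nonempty (q S)) -
              2 * Real.log ((Fintype.card R : ℝ) / β) / ε ≤ q S rr}) :=
  ⟨fun S => exponentialMechanism ε (q S),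
    fun _ r => PMF.softmax_apply _ r,
    fun S S' hS T => exponentialMechanism_toOuterMeasure_le hε.le (fun r => hq r S S' hS) T,
    fun S _ hβ => ofReal_one_sub_le_exponentialMechanism_toOuterMeasure hε hβ.1 (q S)⟩
end

section
/- Let M₁ : Xⁿ → (distributions over ℛ₁) be (ε₁,δ₁)-differentially private, and let M₂ : Xⁿ × ℛ₁ → (distributions over ℛ₂) be such that for every fixed r ∈ ℛ₁ the algorithm S ↦ M₂(S, r) is (ε₂,δ₂)-differentially private. Then the adaptive composition M(S) defined by sampling r ← M₁(S) and outputting a sample from M₂(S, r) is (ε₁+ε₂, δ₁+δ₂)-differentially private. -/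
/-- A randomized algorithm `M` from `Xⁿ` to distributions over `ℛ` is
`(ε,δ)`-differentially private if for all neighboring `S, S'` and all `T ⊆ ℛ`,
`Pr[M(S) ∈ T] ≤ e^ε · Pr[M(S') ∈ T] + δ`. -/
def DiffPrivate {X : Type*} {n : ℕ} {R : Type*} (M : (Fin n → X) → PMF R)
    (ε δ : ℝ) : Prop :=
  ∀ S S' : Fin n → X, Neighboring S S' → ∀ T : Set R,
    (M S).toOuterMeasure T ≤
      ENNReal.ofReal (Real.exp ε) * (M S').toOuterMeasure T + ENNReal.ofReal δ

open MeasureTheory ENNReal Set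

namespace PMF

variable {α β : Type*}

theorem toOuterMeasure_apply_le_one (P : PMF α) (T : Set α) : P.toOuterMeasure T ≤ 1 :=
  (P.toOuterMeasure.mono (subset_univ T)).trans
    ((toOuterMeasure_apply_eq_one_iff P univ).2 (subset_univ _)).le

theorem tsum_mul_eq_setLIntegral_toOuterMeasure [Countable α] (P : PMF α) {f : α → ℝ≥0∞}
    (hf : ∀ a, f a ≤ 1) :
    ∑' a, P a * f a = ∫⁻ t in Ico (0 : ℝ) 1, P.toOuterMeasure {a | ENNReal.ofReal t < f a} := by
  have hmeas : ∀ a, MeasurableSet {t : ℝ | ENNReal.ofReal t < f a} :=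
    fun a => ENNReal.measurable_ofReal measurableSet_Iio
  have hlevel : ∀ a, {t : ℝ | ENNReal.ofReal t < f a} ∩ Ico 0 1 = Ico 0 (f a).toReal := by
    intro a
    have hfa : f a ≠ ⊤ := ne_top_of_le_ne_top one_ne_top (hf a)
    have : (f a).toReal ≤ 1 := toReal_le_of_le_ofReal zero_le_one (by simpa using hf a)
    ext t
    simp only [mem_inter_iff, mem_ofPred_eq, mem_Ico]
    constructor
    · rintro ⟨hlt, h0, -⟩
      exact ⟨h0, (ofReal_lt_iff_lt_toReal h0 hfa).1 hlt⟩
    · rintro ⟨h0, hlt⟩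
      exact ⟨(ofReal_lt_iff_lt_toReal h0 hfa).2 hlt, h0, by linarith⟩
  calc ∑' a, P a * f a
      = ∑' a, ∫⁻ t in Ico (0 : ℝ) 1,
          {t : ℝ | ENNReal.ofReal t < f a}.indicator (fun _ => P a) t := by
        refine tsum_congr fun a => ?_
        rw [lintegral_indicator_const (hmeas a), Measure.restrict_apply (hmeas a), hlevel,
          Real.volume_Ico, sub_zero, ofReal_toReal (ne_top_of_le_ne_top one_ne_top (hf a)),
          mul_comm]
    _ = ∫⁻ t in Ico (0 : ℝ) 1, P.toOuterMeasure {a | ENNReal.ofReal t < f a} := by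
        rw [← lintegral_tsum fun a => (measurable_const.indicator (hmeas a)).aemeasurable]
        refine lintegral_congr fun t => ?_
        rw [toOuterMeasure_apply]
        exact tsum_congr fun a => by simp [indicator_apply]

/-- `DiffPrivate M ε δ` says `(M S).ApproxLE (M S') (ENNReal.ofReal (Real.exp ε))
(ENNReal.ofReal δ)` for all neighbouring `S`, `S'`. -/
def ApproxLE (P Q : PMF α) (c d : ℝ≥0∞) : Prop :=
  ∀ T : Set α, P.toOuterMeasure T ≤ c * Q.toOuterMeasure T + d

theorem ApproxLE.tsum_mul_le [Countable α] {P Q : PMF α} {c d : ℝ≥0∞} (h : P.ApproxLE Q c d)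
    {f : α → ℝ≥0∞} (hf : ∀ a, f a ≤ 1) :
    ∑' a, P a * f a ≤ c * ∑' a, Q a * f a + d := by
  have hanti : Antitone fun t : ℝ => Q.toOuterMeasure {a | ENNReal.ofReal t < f a} :=
    fun s t hst => Q.toOuterMeasure.mono fun a ha => (ofReal_le_ofReal hst).trans_lt ha
  rw [P.tsum_mul_eq_setLIntegral_toOuterMeasure hf, Q.tsum_mul_eq_setLIntegral_toOuterMeasure hf]
  calc ∫⁻ t in Ico (0 : ℝ) 1, P.toOuterMeasure {a | ENNReal.ofReal t < f a}
      ≤ ∫⁻ t in Ico (0 : ℝ) 1, (c * Q.toOuterMeasure {a | ENNReal.ofReal t < f a} + d) :=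
        lintegral_mono fun t => h _
    _ = c * (∫⁻ t in Ico (0 : ℝ) 1, Q.toOuterMeasure {a | ENNReal.ofReal t < f a}) + d := by
        rw [lintegral_add_right _ measurable_const, lintegral_const_mul c hanti.measurable,
          setLIntegral_const, Real.volume_Ico]
        norm_num

theorem ApproxLE.bind [Countable α] {P Q : PMF α} {K L : α → PMF β} {c₁ d₁ c₂ d₂ : ℝ≥0∞}
    (hPQ : P.ApproxLE Q c₁ d₁) (hKL : ∀ a, (K a).ApproxLE (L a) c₂ d₂) :
    (P.bind K).ApproxLE (Q.bind L) (c₁ * c₂) (d₁ + d₂) := by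
  intro T
  simp only [toOuterMeasure_bind_apply]
  set f : α → ℝ≥0∞ := fun a => min 1 (c₂ * (L a).toOuterMeasure T)
  have hK : ∀ a, (K a).toOuterMeasure T ≤ f a + d₂ := fun a => by
    rcases le_total 1 (c₂ * (L a).toOuterMeasure T) with h | h
    · exact ((K a).toOuterMeasure_apply_le_one T).trans (by simp [f, h])
    · simpa [f, h] using hKL a T
  calc ∑' a, P a * (K a).toOuterMeasure T
      ≤ ∑' a, (P a * f a + P a * d₂) :=
        ENNReal.tsum_le_tsum fun a => (mul_le_mul_right (hK a) _).trans_eq (mul_add _ _ _)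
    _ = ∑' a, P a * f a + d₂ := by
        rw [ENNReal.tsum_add, ENNReal.tsum_mul_right, P.tsum_coe, one_mul]
    _ ≤ c₁ * ∑' a, Q a * f a + d₁ + d₂ := by
        gcongr; exact hPQ.tsum_mul_le fun a => min_le_left _ _
    _ ≤ c₁ * ∑' a, Q a * (c₂ * (L a).toOuterMeasure T) + d₁ + d₂ := by
        gcongr with a; exact min_le_right _ _
    _ = c₁ * c₂ * ∑' a, Q a * (L a).toOuterMeasure T + (d₁ + d₂) := by
        simp_rw [mul_left_comm (Q _) c₂, ENNReal.tsum_mul_left, mul_assoc, add_assoc]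

end PMF

theorem stmt_5_general (X : Type*) (n : ℕ) (R₁ R₂ : Type*) [Countable R₁]
    (ε₁ δ₁ ε₂ δ₂ : ℝ) (hδ₁ : 0 ≤ δ₁) (hδ₂ : 0 ≤ δ₂)
    (M₁ : (Fin n → X) → PMF R₁) (M₂ : (Fin n → X) → R₁ → PMF R₂)
    (h₁ : DiffPrivate M₁ ε₁ δ₁)
    (h₂ : ∀ r : R₁, DiffPrivate (fun S => M₂ S r) ε₂ δ₂) :
    DiffPrivate (fun S => (M₁ S).bind (M₂ S)) (ε₁ + ε₂) (δ₁ + δ₂) := by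
  intro S S' hSS'
  rw [Real.exp_add, ENNReal.ofReal_mul (Real.exp_nonneg ε₁), ENNReal.ofReal_add hδ₁ hδ₂]
  exact PMF.ApproxLE.bind (h₁ S S' hSS') fun r => h₂ r S S' hSS'

/-- **Basic composition (Lemma 2.7).** If `M₁ : Xⁿ → Δ(ℛ₁)` is `(ε₁,δ₁)`-differentially
private and `M₂ : Xⁿ × ℛ₁ → Δ(ℛ₂)` is `(ε₂,δ₂)`-differentially private for every fixed
value of its second argument, then the adaptive composition
`M(S) = M₂(S, M₁(S))` (monadic bind) is `(ε₁+ε₂, δ₁+δ₂)`-differentially private. -/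
theorem stmt_5 (X : Type*) (n : ℕ) (R₁ R₂ : Type*) [Countable R₁] [Countable R₂]
    (ε₁ δ₁ ε₂ δ₂ : ℝ) (hε₁ : 0 ≤ ε₁) (hδ₁ : 0 ≤ δ₁) (hε₂ : 0 ≤ ε₂) (hδ₂ : 0 ≤ δ₂)
    (M₁ : (Fin n → X) → PMF R₁) (M₂ : (Fin n → X) → R₁ → PMF R₂)
    (h₁ : DiffPrivate M₁ ε₁ δ₁)
    (h₂ : ∀ r : R₁, DiffPrivate (fun S => M₂ S r) ε₂ δ₂) :
    DiffPrivate (fun S => (M₁ S).bind (M₂ S)) (ε₁ + ε₂) (δ₁ + δ₂) :=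
  stmt_5_general X n R₁ R₂ ε₁ δ₁ ε₂ δ₂ hδ₁ hδ₂ M₁ M₂ h₁ h₂
end

section
/- Let μ be a probability measure on a measurable space X, let 𝒯 be a finite collection of measurable subsets of X that is totally ordered by inclusion (a chain), let α, β ∈ (0,1), and let n ≥ 8·log(2/β)/α. Then, for x_1,…,x_n drawn i.i.d. from μ, the probability that there exists E ∈ 𝒯 with μ(E) > α and |{j ∈ [n] : x_j ∈ E}| ≤ αn/2 is at most β/2. -/
/-!
The sets of `𝒯` of measure greater than `α` form a finite chain, so if there is any, there is a
least one `E₀`. Every such `E` contains `E₀` and hence at least as many sample points, so the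
bad event is contained in the single event that `E₀` catches at most `αn/2` of the `n` points.
The Chernoff bound for this binomial lower tail, with the moment generating function evaluated
at `t = -log 2`, gives
`2^(αn/2) (1 - μ E₀ / 2)^n ≤ exp ((log 2 / 2 - 1/2) αn) ≤ exp (-αn/8)`,
which is at most `β/2` by the choice of `n`.
-/

open MeasureTheory ProbabilityTheory Real

theorem IsChain.exists_isLeast_of_finite {α : Type*} [Preorder α] {s : Set α}
    (hc : IsChain (· ≤ ·) s) (hs : s.Finite) (hne : s.Nonempty) : ∃ a, IsLeast s a := by
  obtain ⟨a, ha⟩ := hs.exists_minimal hne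
  refine ⟨a, ha.1, fun b hb => ?_⟩
  rcases eq_or_ne a b with rfl | hab
  · exact le_rfl
  · exact (hc ha.1 hb hab).elim id fun hba => ha.2 hb hba

section SampleCount

variable {X ι : Type*} [Fintype ι]

lemma natCard_mem_eq_sum_indicator (E : Set X) (x : ι → X) :
    (Nat.card {j // x j ∈ E} : ℝ) = ∑ j, E.indicator 1 (x j) := by
  classical
  rw [Nat.card_eq_fintype_card, Fintype.card_subtype, Finset.card_filter]
  push_cast
  simp [Set.indicator_apply]

lemma natCard_mem_mono {E F : Set X} (h : E ⊆ F) (x : ι → X) :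
    Nat.card {j // x j ∈ E} ≤ Nat.card {j // x j ∈ F} :=
  Nat.card_mono (Set.toFinite _) fun _ hj => h hj

lemma exp_mul_indicator_one (E : Set X) (t : ℝ) (y : X) :
    exp (t * E.indicator 1 y) = 1 + E.indicator (fun _ => exp t - 1) y := by
  by_cases hy : y ∈ E <;> simp [hy]

lemma integrable_exp_mul_indicator [MeasurableSpace X] (μ : Measure X) [IsFiniteMeasure μ]
    {E : Set X} (hE : MeasurableSet E) (t : ℝ) :
    Integrable (fun y => exp (t * E.indicator 1 y)) μ := by
  simp_rw [exp_mul_indicator_one]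
  exact (integrable_const 1).add ((integrable_const _).indicator hE)

lemma integral_exp_mul_indicator [MeasurableSpace X] (μ : Measure X) [IsProbabilityMeasure μ]
    {E : Set X} (hE : MeasurableSet E) (t : ℝ) :
    ∫ y, exp (t * E.indicator 1 y) ∂μ = 1 + (exp t - 1) * μ.real E := by
  simp_rw [exp_mul_indicator_one]
  rw [integral_add (integrable_const 1) ((integrable_const _).indicator hE),
    integral_indicator_const _ hE]
  simp [mul_comm]

lemma mgf_natCard_mem [MeasurableSpace X] (μ : Measure X) [IsProbabilityMeasure μ] {E : Set X}
    (hE : MeasurableSet E) (t : ℝ) :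
    mgf (fun x : ι → X => (Nat.card {j // x j ∈ E} : ℝ)) (Measure.pi fun _ => μ) t
      = (1 + (exp t - 1) * μ.real E) ^ Fintype.card ι := by
  simp_rw [mgf, natCard_mem_eq_sum_indicator, Finset.mul_sum, exp_sum]
  rw [integral_fintype_prod_eq_pow (fun y => exp (t * E.indicator 1 y)),
    integral_exp_mul_indicator μ hE]

lemma measureReal_natCard_mem_le_le [MeasurableSpace X] (μ : Measure X) [IsProbabilityMeasure μ]
    {E : Set X} (hE : MeasurableSet E) {t : ℝ} (ht : t ≤ 0) (a : ℝ) :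
    (Measure.pi fun _ : ι => μ).real {x | (Nat.card {j // x j ∈ E} : ℝ) ≤ a}
      ≤ exp (-t * a) * (1 + (exp t - 1) * μ.real E) ^ Fintype.card ι := by
  rw [← mgf_natCard_mem μ hE t]
  refine measure_le_le_exp_mul_mgf a ht ?_
  simp_rw [natCard_mem_eq_sum_indicator, Finset.mul_sum, exp_sum]
  exact Integrable.fintype_prod fun _ => integrable_exp_mul_indicator μ hE t

lemma measureReal_natCard_mem_le_le_two_rpow [MeasurableSpace X] (μ : Measure X)
    [IsProbabilityMeasure μ] {E : Set X} (hE : MeasurableSet E) (a : ℝ) :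
    (Measure.pi fun _ : ι => μ).real {x | (Nat.card {j // x j ∈ E} : ℝ) ≤ a}
      ≤ 2 ^ a * (1 - μ.real E / 2) ^ Fintype.card ι := by
  convert measureReal_natCard_mem_le_le μ hE (neg_nonpos.2 (log_nonneg one_le_two)) a using 2
  · rw [neg_neg, rpow_def_of_pos two_pos]
  · rw [exp_neg, exp_log two_pos]
    ring

end SampleCount

lemma two_rpow_mul_one_sub_half_pow_le {α β p : ℝ} {n : ℕ} (hα : 0 < α) (hβ : 0 < β)
    (hαp : α < p) (hp : p ≤ 2) (hn : 8 * log (2 / β) / α ≤ n) :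
    2 ^ (α * n / 2) * (1 - p / 2) ^ n ≤ β / 2 := by
  have hlog : 8 * log (2 / β) ≤ n * α := (div_le_iff₀ hα).1 hn
  have hrate : α * log 2 / 2 - p / 2 + α / 8 ≤ 0 := by
    nlinarith [log_two_lt_d9]
  calc 2 ^ (α * n / 2) * (1 - p / 2) ^ n ≤ exp (log 2 * (α * n / 2)) * exp (-(p / 2)) ^ n := by
        rw [rpow_def_of_pos two_pos]
        gcongr
        · linarith
        · exact one_sub_le_exp_neg _
    _ = exp (n * (α * log 2 / 2 - p / 2 + α / 8) - α * n / 8) := by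
        rw [← exp_nat_mul, ← exp_add]
        congr 1
        ring
    _ ≤ exp (log (β / 2)) := by
        rw [exp_le_exp, ← inv_div 2 β, log_inv]
        nlinarith [mul_nonpos_of_nonneg_of_nonpos n.cast_nonneg hrate]
    _ = β / 2 := exp_log (by positivity)

/-- **Generalization for a chain of events (Chernoff step of Theorem 3.11).**
Let `μ` be a probability measure on `X`, let `𝒯` be a finite chain (under inclusion) of
measurable subsets of `X`, let `α, β ∈ (0,1)`, and let `n ≥ 8·log(2/β)/α`.  For i.i.d.
draws `x_1, …, x_n ∼ μ`, the probability that some `E ∈ 𝒯` satisfies `μ(E) > α` while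
`|{j : x_j ∈ E}| ≤ αn/2` is at most `β/2`. -/
theorem stmt_14 (X : Type*) [MeasurableSpace X] (μ : Measure X) [IsProbabilityMeasure μ]
    (𝒯 : Finset (Set X)) (hmeas : ∀ E ∈ 𝒯, MeasurableSet E)
    (hchain : IsChain (· ⊆ ·) (𝒯 : Set (Set X)))
    (α β : ℝ) (hα : α ∈ Set.Ioo (0:ℝ) 1) (hβ : β ∈ Set.Ioo (0:ℝ) 1)
    (n : ℕ) (hn : 8 * Real.log (2 / β) / α ≤ (n : ℝ)) :
    Measure.pi (fun _ : Fin n => μ)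
      {x : Fin n → X | ∃ E ∈ 𝒯, ENNReal.ofReal α < μ E ∧
        (Nat.card {j : Fin n // x j ∈ E} : ℝ) ≤ α * n / 2} ≤
      ENNReal.ofReal (β / 2) := by
  set heavy : Set (Set X) := {E ∈ (𝒯 : Set (Set X)) | ENNReal.ofReal α < μ E}
  rcases heavy.eq_empty_or_nonempty with hempty | hne
  · refine (measure_mono_null (t := ∅) ?_ measure_empty).trans_le zero_le
    rintro x ⟨E, hE, hμE, -⟩
    exact hempty.subset ⟨hE, hμE⟩
  obtain ⟨E₀, ⟨hE₀, hμE₀⟩, hleast⟩ := IsChain.exists_isLeast_of_finite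
    (hchain.mono (Set.sep_subset _ _)) (𝒯.finite_toSet.subset (Set.sep_subset _ _)) hne
  have hαE₀ : α < μ.real E₀ :=
    (ENNReal.ofReal_lt_iff_lt_toReal hα.1.le (measure_ne_top μ E₀)).1 hμE₀
  calc _ ≤ Measure.pi (fun _ : Fin n => μ)
        {x | (Nat.card {j : Fin n // x j ∈ E₀} : ℝ) ≤ α * n / 2} :=
        measure_mono <| by
          rintro x ⟨E, hE, hμE, hcard⟩
          exact le_trans (by exact_mod_cast natCard_mem_mono (hleast ⟨hE, hμE⟩) x) hcard
    _ = ENNReal.ofReal ((Measure.pi fun _ : Fin n => μ).real _) :=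
        (ofReal_measureReal (measure_ne_top _ _)).symm
    _ ≤ ENNReal.ofReal (β / 2) := by
        refine ENNReal.ofReal_le_ofReal
          ((measureReal_natCard_mem_le_le_two_rpow μ (hmeas E₀ hE₀) _).trans ?_)
        rw [Fintype.card_fin]
        exact two_rpow_mul_one_sub_half_pow_le hα.1 hβ.1 hαE₀
          (measureReal_le_one.trans one_le_two) hn
end

section
/- Fix n ∈ ℕ and any evaluation map eval : {0,1}^* → ({0,1}^* → {0,1}). Let 𝒞 be any infinite class of functions {0,1}^* → {0,1}, and let L be an algorithm taking n labeled examples from {0,1}^* × {0,1} and outputting a (random) string in {0,1}^*, interpreted as the hypothesis eval of that string. Suppose L is pure 1-differentially private and is a (1/2, 1/2)-uniform-PAC learner for 𝒞. Then for every labeled sample S of size n, the expected description length E_{w ← L(S)}[|w|] is infinite. -/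
/-!
For each `M` there are finitely many strings of length at most `M`, so the hypotheses they
describe induce finitely many labelings, and an infinite class contains a concept `c` and points
`y₀, y₁` with `c y₀ ≠ c y₁` that none of these hypotheses separates. On the uniform distribution
over `(y₀, c y₀)` and `(y₁, c y₁)`, which is realizable by `c`, every short hypothesis has loss
exactly `1/2`, so the learner outputs a string longer than `M` with probability at least `1/2` on
a random sample, hence, by group privacy (a factor `eⁿ`), with probability at least `e⁻ⁿ/2` on
every sample. Summing these tail probabilities over `M` gives infinite expected length.
-/

open MeasureTheory

/-- Strings `{0,1}^*` (and everything built from them) carry the discrete σ-algebra. -/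
instance : MeasurableSpace (List Bool) := ⊤

open scoped ENNReal

instance : MeasurableSingletonClass (List Bool) := ⟨fun _ => MeasurableSpace.measurableSet_top⟩

theorem Set.Infinite.exists_not_factorsThrough {X κ β : Type*} [Finite κ] [Finite β]
    [Nonempty β] {𝒞 : Set (X → β)} (h𝒞 : 𝒞.Infinite) (key : X → κ) :
    ∃ c ∈ 𝒞, ¬ c.FactorsThrough key := by
  by_contra! hfac
  refine h𝒞 ((Set.finite_range fun e : κ → β => e ∘ key).subset fun c hc => ?_)
  obtain ⟨e, rfl⟩ := (Function.factorsThrough_iff c).mp (hfac c hc)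
  exact ⟨e, rfl⟩

theorem Set.Infinite.exists_mem_ne_of_short_eval_eq {X : Type*} {𝒞 : Set (X → Bool)}
    (h𝒞 : 𝒞.Infinite) (eval : List Bool → X → Bool) (M : ℕ) :
    ∃ c ∈ 𝒞, ∃ y₀ y₁ : X,
      (∀ w : List Bool, w.length ≤ M → eval w y₀ = eval w y₁) ∧ c y₀ ≠ c y₁ := by
  have : Finite {w : List Bool // w.length ≤ M} := (List.finite_length_le Bool M).to_subtype
  obtain ⟨c, hc, hfac⟩ :=
    h𝒞.exists_not_factorsThrough fun y (w : {w : List Bool // w.length ≤ M}) => eval w y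
  simp only [Function.FactorsThrough, not_forall] at hfac
  obtain ⟨y₀, y₁, heval, hne⟩ := hfac
  exact ⟨c, hc, y₀, y₁, fun w hw => congrFun heval ⟨w, hw⟩, hne⟩

section TwoPoint

variable {α : Type*} [MeasurableSpace α]

noncomputable def twoPoint (a b : α) : Measure α :=
  (2⁻¹ : ℝ≥0∞) • (Measure.dirac a + Measure.dirac b)

instance (a b : α) : IsProbabilityMeasure (twoPoint a b) := by
  constructor
  simp [twoPoint, ENNReal.inv_two_add_inv_two]

theorem twoPoint_apply [MeasurableSingletonClass α] (a b : α) (s : Set α) :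
    twoPoint a b s = 2⁻¹ * (s.indicator 1 a + s.indicator 1 b) := by
  simp [twoPoint, Measure.dirac_apply, mul_add]

end TwoPoint

section Loss

variable {X : Type*} [MeasurableSpace X] [MeasurableSingletonClass X]

theorem twoPoint_label_ne (c : X → Bool) (y₀ y₁ : X) :
    twoPoint (y₀, c y₀) (y₁, c y₁) {p | p.2 ≠ c p.1} = 0 := by
  simp [twoPoint_apply]

theorem twoPoint_eval_ne {c h : X → Bool} {y₀ y₁ : X} (hc : c y₀ ≠ c y₁) (hh : h y₀ = h y₁) :
    twoPoint (y₀, c y₀) (y₁, c y₁) {p | h p.1 ≠ p.2} = 2⁻¹ := by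
  simp only [twoPoint_apply, Set.indicator_apply, Set.mem_ofPred_eq, Pi.one_apply, hh]
  revert hc
  cases h y₁ <;> cases c y₀ <;> cases c y₁ <;> simp

end Loss

/-- `e` is the privacy factor `exp ε`. -/
def IsPureDP {X α : Type*} {n : ℕ} (L : (Fin n → X) → PMF α) (e : ℝ≥0∞) : Prop :=
  ∀ S S' : Fin n → X, Neighboring S S' →
    ∀ T : Set α, (L S).toOuterMeasure T ≤ e * (L S').toOuterMeasure T

theorem IsPureDP.toOuterMeasure_le_pow_mul {X α : Type*} {n : ℕ} {L : (Fin n → X) → PMF α}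
    {e : ℝ≥0∞} (hL : IsPureDP L e) (S S' : Fin n → X) (T : Set α) :
    (L S').toOuterMeasure T ≤ e ^ n * (L S).toOuterMeasure T := by
  let hybrid (k : ℕ) : Fin n → X := fun j => if (j : ℕ) < k then S' j else S j
  have key : ∀ k ≤ n, (L (hybrid k)).toOuterMeasure T ≤ e ^ k * (L S).toOuterMeasure T := by
    intro k
    induction k with
    | zero => simp [hybrid]
    | succ k ih =>
      intro hk
      have hN : Neighboring (hybrid (k + 1)) (hybrid k) :=
        ⟨⟨k, hk⟩, fun j hj => by
          have : (j : ℕ) < k + 1 ↔ (j : ℕ) < k := by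
            have : (j : ℕ) ≠ k := fun h => hj (Fin.ext h)
            omega
          simp only [hybrid, this]⟩
      calc (L (hybrid (k + 1))).toOuterMeasure T ≤ e * (L (hybrid k)).toOuterMeasure T :=
            hL _ _ hN T
        _ ≤ e * (e ^ k * (L S).toOuterMeasure T) := by gcongr; exact ih (by omega)
        _ = e ^ (k + 1) * (L S).toOuterMeasure T := by ring
  simpa [hybrid] using key n le_rfl

theorem PMF.tsum_mul_natCast_eq_tsum_toOuterMeasure {α : Type*} (p : PMF α) (f : α → ℕ) :
    ∑' a, p a * (f a : ℝ≥0∞) = ∑' M : ℕ, p.toOuterMeasure {a | M < f a} := by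
  have hcount (a : α) : p a * (f a : ℝ≥0∞) = ∑' M : ℕ, if M < f a then p a else 0 := by
    rw [tsum_eq_sum (s := Finset.range (f a)) fun M hM => if_neg (by simpa using hM),
      Finset.sum_congr rfl fun M hM => if_pos (Finset.mem_range.mp hM)]
    simp [mul_comm]
  simp_rw [hcount, PMF.toOuterMeasure_apply, Set.indicator_apply, Set.mem_ofPred_eq]
  exact ENNReal.tsum_comm

theorem ENNReal.tsum_eq_top_of_forall_le_mul {ι : Type*} [Infinite ι] {f : ι → ℝ≥0∞}
    {a b : ℝ≥0∞} (ha : a ≠ 0) (hb : b ≠ ⊤) (h : ∀ i, a ≤ b * f i) : ∑' i, f i = ⊤ := by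
  by_contra hne
  refine ENNReal.mul_ne_top hb hne (top_le_iff.mp ?_)
  calc ⊤ = ∑' _ : ι, a := (ENNReal.tsum_const_eq_top_of_ne_zero ha).symm
    _ ≤ ∑' i, b * f i := ENNReal.tsum_le_tsum h
    _ = b * ∑' i, f i := ENNReal.tsum_mul_left

/-- `(1/2, 1/2)`-uniform-PAC learning of `𝒞` from `n` examples. -/
def IsUniformPAC {X : Type*} [MeasurableSpace X] {n : ℕ} (eval : List Bool → X → Bool)
    (𝒞 : Set (X → Bool)) (L : (Fin n → (X × Bool)) → PMF (List Bool)) : Prop :=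
  ∀ c ∈ 𝒞, ∀ D : Measure (X × Bool), IsProbabilityMeasure D → D {p | p.2 ≠ c p.1} = 0 →
    (1 / 2 : ℝ≥0∞) ≤
      ∫⁻ S, (L S).toOuterMeasure {w | D {p | eval w p.1 ≠ p.2} < ENNReal.ofReal (1 / 2)}
        ∂(Measure.pi fun _ : Fin n => D)

theorem IsUniformPAC.inv_two_le_pow_mul_toOuterMeasure_length_gt {X : Type*} [MeasurableSpace X]
    [MeasurableSingletonClass X] {n : ℕ} {eval : List Bool → X → Bool} {𝒞 : Set (X → Bool)}
    {L : (Fin n → (X × Bool)) → PMF (List Bool)} {e : ℝ≥0∞} (hPAC : IsUniformPAC eval 𝒞 L)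
    (hDP : IsPureDP L e) (h𝒞 : 𝒞.Infinite) (S : Fin n → (X × Bool)) (M : ℕ) :
    2⁻¹ ≤ e ^ n * (L S).toOuterMeasure {w | M < w.length} := by
  obtain ⟨c, hc, y₀, y₁, hshort, hne⟩ := h𝒞.exists_mem_ne_of_short_eval_eq eval M
  set D := twoPoint (y₀, c y₀) (y₁, c y₁)
  -- On `D`, every hypothesis with description length at most `M` errs with probability `1/2`.
  have hgood : {w | D {p | eval w p.1 ≠ p.2} < ENNReal.ofReal (1 / 2)} ⊆ {w | M < w.length} := by
    intro w hw
    by_contra hlen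
    rw [Set.mem_ofPred_eq, twoPoint_eval_ne hne (hshort w (not_lt.mp hlen))] at hw
    simp [ENNReal.ofReal_inv_of_pos] at hw
  calc (2⁻¹ : ℝ≥0∞) = 1 / 2 := one_div 2 |>.symm
    _ ≤ ∫⁻ S', (L S').toOuterMeasure {w | D {p | eval w p.1 ≠ p.2} < ENNReal.ofReal (1 / 2)}
          ∂(Measure.pi fun _ : Fin n => D) :=
        hPAC c hc D inferInstance (twoPoint_label_ne c y₀ y₁)
    _ ≤ ∫⁻ _, e ^ n * (L S).toOuterMeasure {w | M < w.length} ∂(Measure.pi fun _ : Fin n => D) :=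
        lintegral_mono fun S' => (measure_mono hgood).trans (hDP.toOuterMeasure_le_pow_mul S S' _)
    _ = e ^ n * (L S).toOuterMeasure {w | M < w.length} := by simp

/-- **Proposition 3.17: no pure-private uniform learner for any infinite class has finite
expected description length.**  Fix `n` and an evaluation map
`eval : {0,1}^* → ({0,1}^* → {0,1})`, and let `𝒞` be any infinite class of functions
`{0,1}^* → {0,1}`.  If `L`, taking `n` labeled examples and outputting a string
interpreted as a hypothesis via `eval`, is pure `1`-differentially private and a
`(1/2, 1/2)`-uniform-PAC learner for `𝒞`, then on every labeled sample `S` the expected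
description length `E_{w ← L(S)}[|w|]` is infinite. -/
theorem stmt_18 (n : ℕ) (eval : List Bool → (List Bool → Bool))
    (𝒞 : Set (List Bool → Bool)) (h𝒞 : 𝒞.Infinite)
    (L : (Fin n → (List Bool × Bool)) → PMF (List Bool))
    -- pure 1-differential privacy
    (hDP : ∀ S S' : Fin n → (List Bool × Bool), Neighboring S S' →
      ∀ T : Set (List Bool),
        (L S).toOuterMeasure T ≤
          ENNReal.ofReal (Real.exp 1) * (L S').toOuterMeasure T)
    -- (1/2, 1/2)-uniform-PAC learning of 𝒞
    (hPAC : ∀ c ∈ 𝒞, ∀ D : Measure (List Bool × Bool),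
      IsProbabilityMeasure D →
      D {p : List Bool × Bool | p.2 ≠ c p.1} = 0 →
      (1 / 2 : ENNReal) ≤
        ∫⁻ S, (L S).toOuterMeasure
            {w : List Bool | D {p : List Bool × Bool | eval w p.1 ≠ p.2} <
              ENNReal.ofReal (1 / 2)}
          ∂(Measure.pi fun _ : Fin n => D)) :
    ∀ S : Fin n → (List Bool × Bool),
      ∑' w : List Bool, L S w * (w.length : ENNReal) = ⊤ := by
  intro S
  have htail := IsUniformPAC.inv_two_le_pow_mul_toOuterMeasure_length_gt hPAC hDP h𝒞 S
  rw [(L S).tsum_mul_natCast_eq_tsum_toOuterMeasure List.length]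
  exact ENNReal.tsum_eq_top_of_forall_le_mul (by norm_num)
    (ENNReal.pow_ne_top ENNReal.ofReal_ne_top) htail
end
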